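/- arXiv:2204.09037 — 2 statements merged into one kernel-verified Lean document; each statement's English description precedes it below -/
import Mathlib

section
/- Let 𝔤 be a finite abelian group, Γ ≤ 𝔤 a subgroup with quotient G = 𝔤/Γ, and let I be the kernel of the induced ring map ℤ[𝔤] → ℤ[G]. Then I/I² is isomorphic as an abelian group to ℤ[G] ⊗_ℤ Γ. -/
open MonoidAlgebra TensorProduct

/-!
Write `π : ℤ[𝔤] → ℤ[G]` and choose coset representatives, so that every `g : 𝔤` factors as
`(g : G).out * c g` with `c g ∈ Γ`. The ℤ-linear map `D : g ↦ ḡ ⊗ c g` satisfies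
`D (x * (δ - 1)) = π x ⊗ δ` because `c (g * δ) = c g * δ`. As the elements `x * (δ - 1)` span `I`
over ℤ, `D` kills `I * I` and descends to `I/I² → ℤ[G] ⊗ Γ`. The inverse sends `π x ⊗ δ` to the
class of `x * (δ - 1)`, which modulo `I²` does not depend on the lift `x` of `π x`.
-/

noncomputable section

namespace RelativeAugmentation

variable {𝔤 : Type*} [CommGroup 𝔤] (Γ : Subgroup 𝔤)

def cosetCoord (g : 𝔤) : Γ :=
  ⟨(g : 𝔤 ⧸ Γ).out⁻¹ * g, QuotientGroup.leftRel_apply.mp (Quotient.exact (QuotientGroup.out_eq' _))⟩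

lemma out_mul_cosetCoord (g : 𝔤) : (g : 𝔤 ⧸ Γ).out * cosetCoord Γ g = g :=
  mul_inv_cancel_left _ _

lemma cosetCoord_mul (g : 𝔤) (δ : Γ) : cosetCoord Γ (g * δ) = cosetCoord Γ g * δ := by
  ext
  simp [cosetCoord, QuotientGroup.mk_mul_of_mem g δ.2, mul_assoc]

abbrev proj : MonoidAlgebra ℤ 𝔤 →+* MonoidAlgebra ℤ (𝔤 ⧸ Γ) :=
  mapDomainRingHom ℤ (QuotientGroup.mk' Γ)

abbrev ideal : Ideal (MonoidAlgebra ℤ 𝔤) := RingHom.ker (proj Γ)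

lemma proj_single (g : 𝔤) (z : ℤ) : proj Γ (single g z) = single (g : 𝔤 ⧸ Γ) z :=
  mapDomain_single

abbrev liftOut : MonoidAlgebra ℤ (𝔤 ⧸ Γ) →ₗ[ℤ] MonoidAlgebra ℤ 𝔤 :=
  mapDomainLinearMap ℤ ℤ Quotient.out

lemma proj_liftOut (x : MonoidAlgebra ℤ (𝔤 ⧸ Γ)) : proj Γ (liftOut Γ x) = x := by
  induction x using MonoidAlgebra.induction_linear with
  | zero => simp
  | add x y hx hy => rw [map_add, map_add, hx, hy]
  | single q z => rw [mapDomainLinearMap_single, proj_single, QuotientGroup.out_eq']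

lemma liftOut_proj_sub_mem (y : MonoidAlgebra ℤ 𝔤) : liftOut Γ (proj Γ y) - y ∈ ideal Γ := by
  rw [RingHom.mem_ker, map_sub, proj_liftOut, sub_self]

lemma single_sub_one_mem (δ : Γ) : single (δ : 𝔤) (1 : ℤ) - 1 ∈ ideal Γ := by
  rw [RingHom.mem_ker, map_sub, map_one, proj_single, one_def,
    (QuotientGroup.eq_one_iff _).mpr δ.2, sub_self]

def toTensor : MonoidAlgebra ℤ 𝔤 →ₗ[ℤ] MonoidAlgebra ℤ (𝔤 ⧸ Γ) ⊗[ℤ] Additive Γ :=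
  (MonoidAlgebra.basis 𝔤 ℤ).constr ℤ fun g =>
    single (g : 𝔤 ⧸ Γ) 1 ⊗ₜ Additive.ofMul (cosetCoord Γ g)

lemma toTensor_single_one (g : 𝔤) :
    toTensor Γ (single g 1) = single (g : 𝔤 ⧸ Γ) 1 ⊗ₜ Additive.ofMul (cosetCoord Γ g) := by
  rw [toTensor, ← MonoidAlgebra.basis_apply, Module.Basis.constr_basis]

lemma toTensor_mul_single_sub_one (x : MonoidAlgebra ℤ 𝔤) (δ : Γ) :
    toTensor Γ (x * (single (δ : 𝔤) 1 - 1)) = proj Γ x ⊗ₜ Additive.ofMul δ := by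
  induction x using MonoidAlgebra.induction_on with
  | of g =>
    rw [of_apply, mul_sub, mul_one, single_mul_single, one_mul, map_sub, toTensor_single_one,
      toTensor_single_one, cosetCoord_mul, QuotientGroup.mk_mul_of_mem g δ.2, proj_single,
      ofMul_mul, tmul_add, add_sub_cancel_left]
  | add x y hx hy => rw [add_mul, map_add, hx, hy, map_add, add_tmul]
  | smul z x hx => rw [smul_mul_assoc, map_smul, hx, map_zsmul, smul_tmul']

def generators : Set (MonoidAlgebra ℤ 𝔤) :=
  {y | ∃ (x : MonoidAlgebra ℤ 𝔤) (δ : Γ), x * (single (δ : 𝔤) 1 - 1) = y}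

lemma span_generators_le_ideal : Submodule.span ℤ (generators Γ) ≤ (ideal Γ).restrictScalars ℤ :=
  Submodule.span_le.mpr fun _ ⟨x, δ, hy⟩ => hy ▸ Ideal.mul_mem_left _ x (single_sub_one_mem Γ δ)

lemma sub_liftOut_proj_mem_span (y : MonoidAlgebra ℤ 𝔤) :
    y - liftOut Γ (proj Γ y) ∈ Submodule.span ℤ (generators Γ) := by
  induction y using MonoidAlgebra.induction_linear with
  | zero => simp
  | add x y hx hy =>
    rw [map_add, map_add, add_sub_add_comm]
    exact Submodule.add_mem _ hx hy
  | single g z =>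
    refine Submodule.subset_span ⟨single (g : 𝔤 ⧸ Γ).out z, cosetCoord Γ g, ?_⟩
    rw [proj_single, mapDomainLinearMap_single, mul_sub, mul_one, single_mul_single, mul_one,
      out_mul_cosetCoord]

lemma mem_span_generators {m : MonoidAlgebra ℤ 𝔤} (hm : m ∈ ideal Γ) :
    m ∈ Submodule.span ℤ (generators Γ) := by
  have h := sub_liftOut_proj_mem_span Γ m
  rwa [RingHom.mem_ker.mp hm, map_zero, sub_zero] at h

lemma toTensor_mul_eq_zero {a b : MonoidAlgebra ℤ 𝔤} (ha : a ∈ ideal Γ) (hb : b ∈ ideal Γ) :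
    toTensor Γ (a * b) = 0 := by
  replace hb := mem_span_generators Γ hb
  induction hb using Submodule.span_induction with
  | mem y hy =>
    obtain ⟨x, δ, rfl⟩ := hy
    rw [← mul_assoc, toTensor_mul_single_sub_one, map_mul, RingHom.mem_ker.mp ha, zero_mul,
      zero_tmul]
  | zero => rw [mul_zero, map_zero]
  | add x y _ _ hx hy => rw [mul_add, map_add, hx, hy, add_zero]
  | smul z x _ hx => rw [mul_smul_comm, map_smul, hx, smul_zero]

def cotangentToTensor :
    (ideal Γ).Cotangent →ₗ[ℤ] MonoidAlgebra ℤ (𝔤 ⧸ Γ) ⊗[ℤ] Additive Γ :=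
  Ideal.Cotangent.lift (toTensor Γ ∘ₗ (ideal Γ).subtype.restrictScalars ℤ)
    fun a b => toTensor_mul_eq_zero Γ a.2 b.2

lemma cotangentToTensor_toCotangent (m : ideal Γ) :
    cotangentToTensor Γ ((ideal Γ).toCotangent m) = toTensor Γ m := rfl

def subOneCotangent : Additive Γ →ₗ[ℤ] (ideal Γ).Cotangent :=
  AddMonoidHom.toIntLinearMap <| AddMonoidHom.mk'
    (fun δ => (ideal Γ).toCotangent ⟨_, single_sub_one_mem Γ δ.toMul⟩) fun δ ε => by
      rw [← map_add, Ideal.toCotangent_eq, pow_two]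
      convert Ideal.mul_mem_mul (single_sub_one_mem Γ δ.toMul) (single_sub_one_mem Γ ε.toMul)
        using 1
      simp only [toMul_add, Subgroup.coe_mul, Submodule.coe_add, mul_sub, sub_mul,
        single_mul_single, one_mul, mul_one]
      abel

def tensorToCotangent :
    MonoidAlgebra ℤ (𝔤 ⧸ Γ) ⊗[ℤ] Additive Γ →ₗ[ℤ] (ideal Γ).Cotangent :=
  TensorProduct.lift <|
    ((Algebra.lsmul ℤ ℤ (ideal Γ).Cotangent).toLinearMap ∘ₗ liftOut Γ).compl₂ (subOneCotangent Γ)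

lemma tensorToCotangent_tmul (x : MonoidAlgebra ℤ (𝔤 ⧸ Γ)) (δ : Γ) :
    tensorToCotangent Γ (x ⊗ₜ Additive.ofMul δ) = (ideal Γ).toCotangent
      ⟨liftOut Γ x * (single (δ : 𝔤) 1 - 1), Ideal.mul_mem_left _ _ (single_sub_one_mem Γ δ)⟩ :=
  rfl

lemma tensorToCotangent_proj_tmul (y : MonoidAlgebra ℤ 𝔤) (δ : Γ) :
    tensorToCotangent Γ (proj Γ y ⊗ₜ Additive.ofMul δ) = (ideal Γ).toCotangent
      ⟨y * (single (δ : 𝔤) 1 - 1), Ideal.mul_mem_left _ _ (single_sub_one_mem Γ δ)⟩ := by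
  rw [tensorToCotangent_tmul, Ideal.toCotangent_eq]
  change liftOut Γ (proj Γ y) * _ - y * _ ∈ _
  rw [← sub_mul, pow_two]
  exact Ideal.mul_mem_mul (liftOut_proj_sub_mem Γ y) (single_sub_one_mem Γ δ)

lemma cotangentToTensor_comp_tensorToCotangent :
    cotangentToTensor Γ ∘ₗ tensorToCotangent Γ = LinearMap.id := by
  refine TensorProduct.ext' fun x δ => ?_
  obtain ⟨δ, rfl⟩ := Additive.ofMul.surjective δ
  -- `change`, since the two `ℤ`-module structures on the tensor product are not reducibly equal
  change cotangentToTensor Γ (tensorToCotangent Γ (x ⊗ₜ Additive.ofMul δ)) = x ⊗ₜ Additive.ofMul δ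
  rw [tensorToCotangent_tmul, cotangentToTensor_toCotangent, toTensor_mul_single_sub_one,
    proj_liftOut]

lemma tensorToCotangent_comp_cotangentToTensor :
    tensorToCotangent Γ ∘ₗ cotangentToTensor Γ = LinearMap.id := by
  refine LinearMap.ext fun c => ?_
  obtain ⟨⟨m, hm⟩, rfl⟩ := Ideal.toCotangent_surjective _ c
  rw [LinearMap.comp_apply, cotangentToTensor_toCotangent, LinearMap.id_apply]
  induction mem_span_generators Γ hm using Submodule.span_induction with
  | mem y hy =>
    obtain ⟨x, δ, rfl⟩ := hy
    rw [toTensor_mul_single_sub_one, tensorToCotangent_proj_tmul]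
  | zero => rw [map_zero, map_zero]; rfl
  | add x y hx' hy' hx hy =>
    rw [map_add, map_add, hx (span_generators_le_ideal Γ hx'), hy (span_generators_le_ideal Γ hy')]
    rfl
  | smul z x hx' hx =>
    rw [map_smul, map_smul, hx (span_generators_le_ideal Γ hx')]
    rfl

def cotangentEquiv :
    (ideal Γ).Cotangent ≃ₗ[ℤ] MonoidAlgebra ℤ (𝔤 ⧸ Γ) ⊗[ℤ] Additive Γ :=
  LinearEquiv.ofLinearMap (cotangentToTensor Γ) (tensorToCotangent Γ)
    (cotangentToTensor_comp_tensorToCotangent Γ) (tensorToCotangent_comp_cotangentToTensor Γ)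

end RelativeAugmentation

end

theorem relative_augmentation_cotangent_general (𝔤 : Type*) [CommGroup 𝔤]
    (Γ : Subgroup 𝔤) :
    Nonempty
      ((RingHom.ker
          (MonoidAlgebra.mapDomainRingHom ℤ (QuotientGroup.mk' Γ))).Cotangent ≃+
        (MonoidAlgebra ℤ (𝔤 ⧸ Γ) ⊗[ℤ] Additive Γ)) :=
  ⟨(RelativeAugmentation.cotangentEquiv Γ).toAddEquiv⟩

/-- Let `𝔤` be a finite abelian group, `Γ ≤ 𝔤` a subgroup with quotient `G = 𝔤/Γ`, and
let `I` be the kernel of the induced ring map `ℤ[𝔤] → ℤ[G]` (the relative augmentation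
ideal).  Then `I/I²` is isomorphic as an abelian group to `ℤ[G] ⊗_ℤ Γ`. -/
theorem relative_augmentation_cotangent (𝔤 : Type*) [CommGroup 𝔤] [Fintype 𝔤]
    (Γ : Subgroup 𝔤) :
    Nonempty
      ((RingHom.ker
          (MonoidAlgebra.mapDomainRingHom ℤ (QuotientGroup.mk' Γ))).Cotangent ≃+
        (MonoidAlgebra ℤ (𝔤 ⧸ Γ) ⊗[ℤ] Additive Γ)) :=
  relative_augmentation_cotangent_general 𝔤 Γ
end

section
/- Let v₁, …, v_n ∈ (ℝ^{>0})^n be linearly independent. The Colmez closure C*(v₁,…,v_n) = ⊔_{J positive} C({v_j : j ∈ J}) is a disjoint union: distinct positive subsets J ≠ J' give disjoint cones C({v_j : j∈J}) ∩ C({v_j : j∈J'}) = ∅. -/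
open Finset

/-- The open simplicial cone on the vectors `{v j : j ∈ J}`: strictly positive linear
combinations of the `v j`, `j ∈ J`. -/
def coneOn {n : ℕ} (v : Fin n → (Fin n → ℝ)) (J : Finset (Fin n)) :
    Set (Fin n → ℝ) :=
  {x | ∃ t : Fin n → ℝ, (∀ i ∈ J, 0 < t i) ∧ (∀ i ∉ J, t i = 0) ∧ x = ∑ i, t i • v i}

theorem eq_filter_ne_zero_of_pos_of_eq_zero {ι : Type*} [Fintype ι] {t : ι → ℝ} {J : Finset ι}
    (hpos : ∀ i ∈ J, 0 < t i) (hzero : ∀ i ∉ J, t i = 0) :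
    J = univ.filter (fun i => t i ≠ 0) := by
  ext i
  by_cases hi : i ∈ J
  · simp [hi, (hpos i hi).ne']
  · simp [hi, hzero i hi]

theorem eq_of_mem_coneOn_of_mem_coneOn {n : ℕ} {v : Fin n → (Fin n → ℝ)}
    (hli : LinearIndependent ℝ v) {J J' : Finset (Fin n)} {x : Fin n → ℝ}
    (hx : x ∈ coneOn v J) (hx' : x ∈ coneOn v J') : J = J' := by
  obtain ⟨t, htJ, htn, rfl⟩ := hx
  obtain ⟨s, hsJ, hsn, hts⟩ := hx'
  obtain rfl : t = s := hli.fintypeLinearCombination_injective <| by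
    simpa only [Fintype.linearCombination_apply] using hts
  rw [eq_filter_ne_zero_of_pos_of_eq_zero htJ htn, eq_filter_ne_zero_of_pos_of_eq_zero hsJ hsn]

/-- Let `v₁, …, v_n ∈ (ℝ^{>0})ⁿ` be linearly independent, and write
`(0,…,0,1) = ∑ qᵢ vᵢ`.  Call a nonempty `J ⊆ {1,…,n}` positive if `qᵢ > 0` for all
`i ∉ J`.  The Colmez closure `C*(v₁,…,v_n) = ⊔_{J positive} C({v_j : j ∈ J})` is a
disjoint union: distinct positive subsets `J ≠ J'` give disjoint cones. -/
theorem colmez_closure_disjoint {n : ℕ}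
    (v : Fin n → (Fin n → ℝ))
    (hli : LinearIndependent ℝ v)
    (J J' : Finset (Fin n))
    (hne : J ≠ J') :
    coneOn v J ∩ coneOn v J' = ∅ :=
  Set.eq_empty_of_forall_notMem fun _ hx => hne (eq_of_mem_coneOn_of_mem_coneOn hli hx.1 hx.2)
end
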